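/- arXiv:1506.06606 — 3 statements merged into one kernel-verified Lean document; each statement's English description precedes it below -/
import Mathlib

section
/- Let Z be a Hilbert space, G₁ a bounded skew-adjoint operator on Z, G₂ ∈ L(U,Z), and let iω ∈ iℝ with iω ∈ ρ(G₁) (the resolvent set of G₁). Then iω ∈ ρ(G₁ − G₂G₂*). -/
open Complex ContinuousLinearMap

lemma one_add_skew_isUnit {U : Type*} [NormedAddCommGroup U] [InnerProductSpace ℂ U]
    [CompleteSpace U] (S : U →L[ℂ] U) (h : ContinuousLinearMap.adjoint S = -S) :
    IsUnit ((1 : U →L[ℂ] U) + S) := by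
  have hsa : IsSelfAdjoint (Complex.I • S) := by
    rw [IsSelfAdjoint, star_smul, ContinuousLinearMap.star_eq_adjoint, h]
    simp [Complex.conj_I]
  by_contra hu
  have hmem : (-1 : ℂ) ∈ spectrum ℂ S := by
    rw [spectrum.mem_iff]
    intro h1
    apply hu
    have e : (1 : U →L[ℂ] U) + S = -(algebraMap ℂ (U →L[ℂ] U) (-1) - S) := by
      simp [Algebra.algebraMap_eq_smul_one]; abel
    rw [e]
    exact h1.neg
  have hmem2 : (Units.mk0 Complex.I Complex.I_ne_zero) • (-1 : ℂ) ∈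
      spectrum ℂ ((Units.mk0 Complex.I Complex.I_ne_zero) • S) :=
    spectrum.smul_mem_smul_iff.mpr hmem
  have := hsa.mem_spectrum_eq_re (by simpa [Units.smul_def] using hmem2)
  simp at this

/-- Let `G₁` be a bounded skew-adjoint operator on a Hilbert space `Z`,
`G₂ ∈ L(U,Z)`, and `iω ∈ ρ(G₁)` with `ω ∈ ℝ`. Then `iω ∈ ρ(G₁ − G₂G₂*)`. -/
theorem stmt2
    {Z U : Type*} [NormedAddCommGroup Z] [InnerProductSpace ℂ Z] [CompleteSpace Z]
    [NormedAddCommGroup U] [InnerProductSpace ℂ U] [CompleteSpace U]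
    (G₁ : Z →L[ℂ] Z) (hskew : ContinuousLinearMap.adjoint G₁ = -G₁)
    (G₂ : U →L[ℂ] Z) (ω : ℝ)
    (hres : (Complex.I * (ω : ℂ)) ∉ spectrum ℂ G₁) :
    (Complex.I * (ω : ℂ)) ∉ spectrum ℂ (G₁ - G₂ ∘L (ContinuousLinearMap.adjoint G₂)) := by
  set c : ℂ := Complex.I * (ω : ℂ) with hc
  rw [spectrum.notMem_iff] at hres ⊢
  obtain ⟨u, hu⟩ := hres
  set R : Z →L[ℂ] Z := ↑u⁻¹ with hR
  have huR : (↑u : Z →L[ℂ] Z) * R = 1 := u.mul_inv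
  have hRu : R * (↑u : Z →L[ℂ] Z) = 1 := u.inv_mul
  -- star u = -u
  have hstaru : star (↑u : Z →L[ℂ] Z) = -(↑u : Z →L[ℂ] Z) := by
    rw [hu]
    simp only [star_sub, ContinuousLinearMap.star_eq_adjoint, hskew,
      Algebra.algebraMap_eq_smul_one, star_smul, star_one, hc]
    rw [show star (Complex.I * (ω : ℂ)) = -(Complex.I * (ω : ℂ)) by simp, neg_smul]
    abel
  -- star R = -R
  have hstarR : star R = -R := by
    have h1 : star R * star (↑u : Z →L[ℂ] Z) = 1 := by
      rw [← star_mul, huR, star_one]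
    rw [hstaru, mul_neg] at h1
    have : star R * ((↑u : Z →L[ℂ] Z) * R) = -R := by
      rw [← mul_assoc, ← neg_neg (star R * ↑u), h1, neg_one_mul]
    rwa [huR, mul_one] at this
  have hadjR : ContinuousLinearMap.adjoint R = -R := by
    rw [← ContinuousLinearMap.star_eq_adjoint]; exact hstarR
  set B : Z →L[ℂ] U := ContinuousLinearMap.adjoint G₂ with hB
  set A : U →L[ℂ] Z := R ∘L G₂ with hA
  set S : U →L[ℂ] U := B ∘L A with hS
  have hSskew : ContinuousLinearMap.adjoint S = -S := by
    rw [hS, hA, hB, ContinuousLinearMap.adjoint_comp, ContinuousLinearMap.adjoint_comp,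
      ContinuousLinearMap.adjoint_adjoint, hadjR]
    simp [ContinuousLinearMap.comp_assoc]
  obtain ⟨v, hv⟩ := one_add_skew_isUnit S hSskew
  set V : U →L[ℂ] U := ↑v⁻¹ with hV
  have h1 : ((1 : U →L[ℂ] U) + S) ∘L V = 1 := by
    have := v.mul_inv; rw [hv] at this; exact this
  have h2 : V ∘L ((1 : U →L[ℂ] U) + S) = 1 := by
    have := v.inv_mul; rw [hv] at this; exact this
  -- pointwise versions
  have h1p : ∀ y : U, V y + S (V y) = y := fun y => by
    have := congrArg (fun T => T y) h1
    simpa [ContinuousLinearMap.comp_apply, ContinuousLinearMap.add_apply] using this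
  have h2p : ∀ y : U, V y + V (S y) = y := fun y => by
    have := congrArg (fun T => T y) h2
    simpa [ContinuousLinearMap.comp_apply, ContinuousLinearMap.add_apply, map_add] using this
  set X : Z →L[ℂ] Z := 1 + A ∘L B with hX
  set Y : Z →L[ℂ] Z := 1 - A ∘L (V ∘L B) with hY
  have hXY : X * Y = 1 := by
    ext x
    simp only [hX, hY, ContinuousLinearMap.mul_apply, ContinuousLinearMap.add_apply,
      ContinuousLinearMap.sub_apply, ContinuousLinearMap.one_apply,
      ContinuousLinearMap.comp_apply, map_sub, map_add]
    have key : A (B x) = A (V (B x)) + A (S (V (B x))) := by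
      rw [← map_add, h1p (B x)]
    rw [key]
    have e : S (V (B x)) = B (A (V (B x))) := rfl
    rw [e]
    abel
  have hYX : Y * X = 1 := by
    ext x
    simp only [hX, hY, ContinuousLinearMap.mul_apply, ContinuousLinearMap.add_apply,
      ContinuousLinearMap.sub_apply, ContinuousLinearMap.one_apply,
      ContinuousLinearMap.comp_apply, map_sub, map_add]
    have e : B (A (B x)) = S (B x) := rfl
    rw [e]
    have key : A (V (B x)) + A (V (S (B x))) = A (B x) := by
      rw [← map_add, h2p (B x)]
    rw [← key]
    abel
  have hunit : IsUnit X := ⟨⟨X, Y, hXY, hYX⟩, rfl⟩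
  have huRp : ∀ z : Z, (↑u : Z →L[ℂ] Z) (R z) = z := fun z => by
    have := congrArg (fun T : Z →L[ℂ] Z => T z) huR
    simpa using this
  have hup : ∀ z : Z, (↑u : Z →L[ℂ] Z) z = c • z - G₁ z := fun z => by
    rw [hu]; simp [Algebra.algebraMap_eq_smul_one]
  have key : (↑u : Z →L[ℂ] Z) * X =
      algebraMap ℂ (Z →L[ℂ] Z) c - (G₁ - G₂ ∘L (ContinuousLinearMap.adjoint G₂)) := by
    ext x
    simp only [hX, hA, hB, ContinuousLinearMap.mul_apply, ContinuousLinearMap.add_apply,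
      ContinuousLinearMap.sub_apply, ContinuousLinearMap.one_apply,
      ContinuousLinearMap.comp_apply, map_add]
    rw [huRp, hup, Algebra.algebraMap_eq_smul_one]
    simp only [ContinuousLinearMap.smul_apply, ContinuousLinearMap.one_apply]
    abel
  rw [← key]
  exact u.isUnit.mul hunit
end

section
/- Let Z₁, Z₂, Y be Hilbert spaces, and suppose the pair (G₁, G₂) with G₁ : D(G₁) ⊂ Z → Z and G₂ ∈ L(Y,Z) satisfies: (i) ran(iω_k − G₁) ∩ ran(G₂) = {0} for all k ∈ {1,…,q}, and (ii) ker(G₂) = {0}. If K : D(G₁) → Y is a linear map with ker(iω_k − G₁) ⊂ ker(K) for all k, then the pair (G₁ + G₂K, G₂) also satisfies (i) and (ii): ran(iω_k − G₁ − G₂K) ∩ ran(G₂) = {0} for all k, and ker(G₂) = {0}. -/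
/-- Invariance of the G-conditions under output feedback `K` vanishing on
the eigenspaces. Here `G₁ : D(G₁) ⊂ Z → Z` is modelled by a linear map on a submodule
`D`, `G₂ ∈ L(Y,Z)`, and `K : D(G₁) → Y` linear. -/
theorem stmt4
    {Z Y : Type*} [NormedAddCommGroup Z] [InnerProductSpace ℂ Z] [CompleteSpace Z]
    [NormedAddCommGroup Y] [InnerProductSpace ℂ Y] [CompleteSpace Y]
    (q : ℕ) (ω : Fin q → ℝ)
    (D : Submodule ℂ Z) (G₁ : D →ₗ[ℂ] Z) (G₂ : Y →L[ℂ] Z) (K : D →ₗ[ℂ] Y)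
    -- (i) ran(iω_k − G₁) ∩ ran(G₂) = {0}
    (hran : ∀ (k : Fin q) (x : Z),
      (∃ z : D, (Complex.I * (ω k : ℂ)) • (z : Z) - G₁ z = x) →
      (∃ y : Y, G₂ y = x) → x = 0)
    -- (ii) ker(G₂) = {0}
    (hker : ∀ y : Y, G₂ y = 0 → y = 0)
    -- ker(iω_k − G₁) ⊂ ker(K)
    (hK : ∀ (k : Fin q) (z : D),
      (Complex.I * (ω k : ℂ)) • (z : Z) - G₁ z = 0 → K z = 0) :
    (∀ (k : Fin q) (x : Z),
      (∃ z : D, (Complex.I * (ω k : ℂ)) • (z : Z) - (G₁ z + G₂ (K z)) = x) →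
      (∃ y : Y, G₂ y = x) → x = 0) ∧
    (∀ y : Y, G₂ y = 0 → y = 0) := by
  refine ⟨?_, hker⟩
  rintro k x ⟨z, hz⟩ ⟨y, hy⟩
  -- (iω)z - G₁z = x + G₂(Kz) = G₂(y + Kz)
  have h1 : (Complex.I * (ω k : ℂ)) • (z : Z) - G₁ z = G₂ (y + K z) := by
    rw [map_add, hy]; rw [← hz]; abel
  have h2 : G₂ (y + K z) = 0 :=
    hran k _ ⟨z, h1⟩ ⟨y + K z, rfl⟩
  have hzker : (Complex.I * (ω k : ℂ)) • (z : Z) - G₁ z = 0 := h1.trans h2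
  have hKz : K z = 0 := hK k z hzker
  have hy0 : y = 0 := by
    have := hker _ h2
    simpa [hKz] using this
  rw [← hy, hy0, map_zero]
end

section
/- Let Y be a Hilbert space, ω₁,…,ω_q distinct real numbers, G₁ = diag(iω₁ I_Y,…,iω_q I_Y) on Z = Y^q, and G₂ = (G₂^k)_k ∈ L(U, Y^q) with each G₂^k ∈ L(U,Y) boundedly invertible. Fix n ∈ {1,…,q}. Then there exists c > 0 such that ‖(iω_n − G₁ + G₂G₂*)z‖ ≥ c‖z‖ for all z ∈ Z. -/
/-!
Write `T = D + G₂G₂*` with `D = iωₙ - G₁`. Since `D` is skew, `Re ⟨Tz, z⟩ = ‖G₂*z‖²`, so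
`‖G₂*z‖² ≤ ‖Tz‖ ‖z‖`. Split `z` into its `n`-th slot and the rest: `D` kills the `n`-th slot and
is bounded below on the rest by the gap `min_{k ≠ n} |ωₙ - ω_k|`, while on the `n`-th slot `G₂*`
acts as `(G₂ⁿ)*`, which is invertible. Together these give `‖z‖ ≤ K (‖Tz‖ + ‖G₂*z‖)`, and AM-GM
applied to `K ‖G₂*z‖ ≤ K √(‖Tz‖ ‖z‖)` turns this into `‖z‖ ≤ (2K + K²) ‖Tz‖`.
-/

set_option synthInstance.maxHeartbeats 800000
set_option maxHeartbeats 800000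

noncomputable section

instance piLpCompleteSpace' (p : ENNReal) {ι : Type*} (Y : ι → Type*)
    [∀ i, UniformSpace (Y i)] [∀ i, CompleteSpace (Y i)] :
    CompleteSpace (PiLp p Y) :=
  inferInstance

open Complex ContinuousLinearMap
open scoped InnerProductSpace

theorem le_mul_of_le_mul_add_of_sq_le_mul {R N g K : ℝ} (hR : 0 ≤ R) (hN : 0 ≤ N)
    (h₁ : R ≤ K * (N + g)) (h₂ : g ^ 2 ≤ N * R) : R ≤ (2 * K + K ^ 2) * N := by
  have hKg : |K * g| ≤ (R + K ^ 2 * N) / 2 := by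
    refine abs_le_of_sq_le_sq ?_ (by positivity)
    calc (K * g) ^ 2 = K ^ 2 * g ^ 2 := by ring
      _ ≤ K ^ 2 * (N * R) := by gcongr
      _ ≤ ((R + K ^ 2 * N) / 2) ^ 2 := by nlinarith [sq_nonneg (R - K ^ 2 * N)]
  linarith [le_abs_self (K * g)]

theorem Function.Injective.exists_one_le_mul_abs_sub {ι : Type*} [Fintype ι] {ω : ι → ℝ}
    (hω : Function.Injective ω) (n : ι) : ∃ C ≥ 0, ∀ k ≠ n, 1 ≤ C * |ω n - ω k| := by
  -- the term `j = n` of the sum is `0⁻¹ = 0`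
  refine ⟨∑ j, |ω n - ω j|⁻¹, by positivity, fun k hk => ?_⟩
  have hk₀ : |ω n - ω k| ≠ 0 := abs_ne_zero.2 (sub_ne_zero.2 (hω.ne hk.symm))
  calc 1 = |ω n - ω k|⁻¹ * |ω n - ω k| := (inv_mul_cancel₀ hk₀).symm
    _ ≤ (∑ j, |ω n - ω j|⁻¹) * |ω n - ω k| := by
      gcongr
      exact Finset.single_le_sum (f := fun j => |ω n - ω j|⁻¹) (fun j _ => by positivity)
        (Finset.mem_univ k)

theorem re_inner_I_mul_ofReal_smul_self {E : Type*} [NormedAddCommGroup E]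
    [InnerProductSpace ℂ E] (r : ℝ) (x : E) : re ⟪(I * r) • x, x⟫_ℂ = 0 := by
  rw [inner_smul_left, inner_self_eq_norm_sq_to_K]
  simp [mul_re, ← ofReal_pow]

theorem ContinuousLinearEquiv.norm_le_norm_adjoint_symm_mul_norm_adjoint_apply
    {𝕜 E F : Type*} [RCLike 𝕜]
    [NormedAddCommGroup E] [InnerProductSpace 𝕜 E] [CompleteSpace E]
    [NormedAddCommGroup F] [InnerProductSpace 𝕜 F] [CompleteSpace F]
    (e : E ≃L[𝕜] F) (y : F) :
    ‖y‖ ≤ ‖adjoint (e.symm : F →L[𝕜] E)‖ * ‖adjoint (e : E →L[𝕜] F) y‖ := by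
  have hy : adjoint (e.symm : F →L[𝕜] E) (adjoint (e : E →L[𝕜] F) y) = y := by
    rw [← comp_apply, ← adjoint_comp, e.coe_comp_coe_symm, adjoint_id, id_apply]
  calc ‖y‖ = ‖adjoint (e.symm : F →L[𝕜] E) (adjoint (e : E →L[𝕜] F) y)‖ := by rw [hy]
    _ ≤ _ := le_opNorm _ _

namespace PiLp

variable {ι : Type*} [Fintype ι] {β : ι → Type*}

theorem norm_le_mul_norm_of_forall_norm_apply_le [∀ i, SeminormedAddCommGroup (β i)]
    {x y : PiLp 2 β} {C : ℝ} (hC : 0 ≤ C) (h : ∀ k, ‖x k‖ ≤ C * ‖y k‖) : ‖x‖ ≤ C * ‖y‖ := by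
  refine le_of_pow_le_pow_left₀ two_ne_zero (by positivity) ?_
  rw [mul_pow, norm_sq_eq_of_L2, norm_sq_eq_of_L2, Finset.mul_sum]
  refine Finset.sum_le_sum fun k _ => ?_
  rw [← mul_pow]
  exact pow_le_pow_left₀ (norm_nonneg _) (h k) 2

theorem re_inner_eq_zero_of_forall_apply_eq_I_mul_smul [∀ i, NormedAddCommGroup (β i)]
    [∀ i, InnerProductSpace ℂ (β i)] {z w : PiLp 2 β} {r : ι → ℝ}
    (hw : ∀ k, w k = (I * r k) • z k) : re ⟪w, z⟫_ℂ = 0 := by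
  rw [inner_apply, re_sum]
  exact Finset.sum_eq_zero fun k _ => by rw [hw, re_inner_I_mul_ofReal_smul_self]

variable [DecidableEq ι]

theorem inner_single_right {𝕜 : Type*} [RCLike 𝕜] [∀ i, NormedAddCommGroup (β i)]
    [∀ i, InnerProductSpace 𝕜 (β i)] (x : PiLp 2 β) (i : ι) (a : β i) :
    ⟪x, single 2 i a⟫_𝕜 = ⟪x i, a⟫_𝕜 := by
  rw [inner_apply, Finset.sum_eq_single i
    (fun k _ hk => by rw [single_eq_of_ne 2 hk, inner_zero_right]) (by simp), single_eq_same]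

theorem norm_sub_single_le_mul_norm_of_forall_apply_eq_smul {𝕜 : Type*} [NormedField 𝕜]
    [∀ i, NormedAddCommGroup (β i)] [∀ i, NormedSpace 𝕜 (β i)] {z w : PiLp 2 β} {c : ι → 𝕜}
    (hw : ∀ k, w k = c k • z k) (n : ι) {C : ℝ} (hC : 0 ≤ C) (hc : ∀ k ≠ n, 1 ≤ C * ‖c k‖) :
    ‖z - single 2 n (z n)‖ ≤ C * ‖w‖ := by
  refine norm_le_mul_norm_of_forall_norm_apply_le hC fun k => ?_
  rcases eq_or_ne k n with rfl | hk
  · simpa using mul_nonneg hC (norm_nonneg _)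
  · rw [sub_apply, single_eq_of_ne 2 hk, sub_zero, hw, norm_smul, ← mul_assoc]
    exact le_mul_of_one_le_left (norm_nonneg _) (hc k hk)

theorem adjoint_apply_single {𝕜 U : Type*} [RCLike 𝕜] [∀ i, NormedAddCommGroup (β i)]
    [∀ i, InnerProductSpace 𝕜 (β i)] [∀ i, CompleteSpace (β i)]
    [NormedAddCommGroup U] [InnerProductSpace 𝕜 U] [CompleteSpace U]
    {G : U →L[𝕜] PiLp 2 β} {n : ι} {Gn : U →L[𝕜] β n} (hG : ∀ u, G u n = Gn u) (a : β n) :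
    adjoint G (single 2 n a) = adjoint Gn a :=
  ext_inner_left 𝕜 fun u => by rw [adjoint_inner_right, adjoint_inner_right, inner_single_right, hG]

end PiLp

section SkewPlusPositive

variable {𝕜 E F : Type*} [RCLike 𝕜]
  [NormedAddCommGroup E] [InnerProductSpace 𝕜 E] [CompleteSpace E]
  [NormedAddCommGroup F] [InnerProductSpace 𝕜 F] [CompleteSpace F]

theorem norm_adjoint_apply_sq_le (D : E → E) (hD : ∀ z, RCLike.re ⟪D z, z⟫_𝕜 = 0)
    (B : F →L[𝕜] E) (z : E) : ‖adjoint B z‖ ^ 2 ≤ ‖D z + B (adjoint B z)‖ * ‖z‖ := by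
  have hre : RCLike.re ⟪D z + B (adjoint B z), z⟫_𝕜 = ‖adjoint B z‖ ^ 2 := by
    rw [inner_add_left, map_add, hD, zero_add, ← adjoint_inner_right B, inner_self_eq_norm_sq]
  exact hre ▸ re_inner_le_norm _ _

theorem exists_norm_le_mul_norm_add_norm_adjoint_apply (D : E → E) (B : F →L[𝕜] E) (p : E → E)
    {C₁ C₂ : ℝ} (hC₁ : 0 ≤ C₁) (hC₂ : 0 ≤ C₂) (hD : ∀ z, ‖z - p z‖ ≤ C₁ * ‖D z‖)
    (hB : ∀ z, ‖p z‖ ≤ C₂ * ‖adjoint B (p z)‖) :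
    ∃ K > 0, ∀ z, ‖z‖ ≤ K * (‖D z + B (adjoint B z)‖ + ‖adjoint B z‖) := by
  refine ⟨(1 + C₂ * ‖adjoint B‖) * C₁ * (1 + ‖B‖) + C₂ + 1, by positivity, fun z => ?_⟩
  set N := ‖D z + B (adjoint B z)‖
  set g := ‖adjoint B z‖
  set P := ‖z - p z‖
  have hP : P ≤ C₁ * (N + ‖B‖ * g) := by
    refine (hD z).trans (mul_le_mul_of_nonneg_left ?_ hC₁)
    calc ‖D z‖ = ‖(D z + B (adjoint B z)) - B (adjoint B z)‖ := by rw [add_sub_cancel_right]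
      _ ≤ N + ‖B‖ * g := (norm_sub_le _ _).trans (add_le_add le_rfl (B.le_opNorm _))
  have hp : ‖p z‖ ≤ C₂ * (g + ‖adjoint B‖ * P) := by
    refine (hB z).trans (mul_le_mul_of_nonneg_left ?_ hC₂)
    calc ‖adjoint B (p z)‖ = ‖adjoint B z - adjoint B (z - p z)‖ := by
          rw [map_sub, sub_sub_cancel]
      _ ≤ g + ‖adjoint B‖ * P :=
          (norm_sub_le _ _).trans (add_le_add le_rfl ((adjoint B).le_opNorm _))
  have hz : ‖z‖ ≤ P + ‖p z‖ := by simpa [P] using norm_add_le (z - p z) (p z)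
  have hN : 0 ≤ N := norm_nonneg _
  have hg : 0 ≤ g := norm_nonneg _
  have hP' : P ≤ C₁ * ((1 + ‖B‖) * (N + g)) :=
    hP.trans (mul_le_mul_of_nonneg_left (by nlinarith [norm_nonneg B]) hC₁)
  have ha : 0 ≤ 1 + C₂ * ‖adjoint B‖ := by positivity
  nlinarith [mul_le_mul_of_nonneg_left hP' ha]

theorem exists_pos_mul_norm_le_norm_add_adjoint_apply (D : E → E)
    (hskew : ∀ z, RCLike.re ⟪D z, z⟫_𝕜 = 0) (B : F →L[𝕜] E) (p : E → E) {C₁ C₂ : ℝ}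
    (hC₁ : 0 ≤ C₁) (hC₂ : 0 ≤ C₂) (hD : ∀ z, ‖z - p z‖ ≤ C₁ * ‖D z‖)
    (hB : ∀ z, ‖p z‖ ≤ C₂ * ‖adjoint B (p z)‖) :
    ∃ c > 0, ∀ z, c * ‖z‖ ≤ ‖D z + B (adjoint B z)‖ := by
  obtain ⟨K, hK, hKz⟩ := exists_norm_le_mul_norm_add_norm_adjoint_apply D B p hC₁ hC₂ hD hB
  refine ⟨(2 * K + K ^ 2)⁻¹, by positivity, fun z => ?_⟩
  rw [inv_mul_le_iff₀ (by positivity)]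
  exact le_mul_of_le_mul_add_of_sq_le_mul (norm_nonneg _) (norm_nonneg _) (hKz z)
    (norm_adjoint_apply_sq_le D hskew B z)

end SkewPlusPositive

/-- quantitative lower bound `‖(iω_n − G₁ + G₂G₂*)z‖ ≥ c‖z‖` on
`Z = Y^q` for the diagonal operator `G₁ = diag(iω₁ I_Y,…,iω_q I_Y)` and
`G₂ = (G₂^k)_k` with boundedly invertible components. -/
theorem stmt11
    {Y U : Type*} [NormedAddCommGroup Y] [InnerProductSpace ℂ Y] [CompleteSpace Y]
    [NormedAddCommGroup U] [InnerProductSpace ℂ U] [CompleteSpace U]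
    (q : ℕ) (ω : Fin q → ℝ) (hω : Function.Injective ω)
    (G₁ : PiLp 2 (fun _ : Fin q => Y) →L[ℂ] PiLp 2 (fun _ : Fin q => Y))
    (hG₁ : ∀ z k, G₁ z k = (Complex.I * (ω k : ℂ)) • z k)
    (G₂k : Fin q → (U →L[ℂ] Y))
    (hinv : ∀ k, ∃ e : U ≃L[ℂ] Y, (e : U →L[ℂ] Y) = G₂k k)
    (G₂ : U →L[ℂ] PiLp 2 (fun _ : Fin q => Y))
    (hG₂ : ∀ u k, G₂ u k = G₂k k u)
    (n : Fin q) :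
    ∃ c > (0 : ℝ), ∀ z : PiLp 2 (fun _ : Fin q => Y),
      c * ‖z‖ ≤ ‖(Complex.I * (ω n : ℂ)) • z - G₁ z
        + G₂ ((ContinuousLinearMap.adjoint G₂) z)‖ := by
  obtain ⟨e, he⟩ := hinv n
  obtain ⟨C, hC, hgap⟩ := hω.exists_one_le_mul_abs_sub n
  have hdiag : ∀ z k, ((I * ω n) • z - G₁ z) k = (I * ((ω n - ω k : ℝ) : ℂ)) • z k := by
    intro z k
    rw [PiLp.sub_apply, PiLp.smul_apply, hG₁, ← sub_smul, ofReal_sub, mul_sub]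
  refine exists_pos_mul_norm_le_norm_add_adjoint_apply (fun z => (I * ω n) • z - G₁ z)
    (fun z => PiLp.re_inner_eq_zero_of_forall_apply_eq_I_mul_smul (hdiag z)) G₂
    (fun z => PiLp.single 2 n (z n)) hC (norm_nonneg (adjoint (e.symm : Y →L[ℂ] U)))
    (fun z => ?_) (fun z => ?_)
  · refine PiLp.norm_sub_single_le_mul_norm_of_forall_apply_eq_smul (hdiag z) n hC fun k hk => ?_
    rw [norm_mul, norm_I, one_mul, norm_real, Real.norm_eq_abs]
    exact hgap k hk
  · rw [PiLp.norm_single, PiLp.adjoint_apply_single (fun u => hG₂ u n), ← he]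
    exact e.norm_le_norm_adjoint_symm_mul_norm_adjoint_apply (z n)

end
end
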